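/- Let μ be a probability measure on a measure space X and Φ : X → ℝ a strictly positive integrable function with ln Φ also integrable. Then |ln(∫ Φ dμ) − ∫ ln Φ dμ| · (∫ Φ dμ) ≤ (sup Φ) · ∫ |ln Φ − ∫ ln Φ dμ| dμ. -/
import Mathlib


open MeasureTheory Filter

private lemma key_pt {t I : ℝ} (ht : 0 < t) (hI : 0 < I) :
    t - I ≤ t * (Real.log t - Real.log I) := by
  have h := Real.log_le_sub_one_of_pos (show (0:ℝ) < I / t by positivity)
  rw [Real.log_div hI.ne' ht.ne'] at h
  have h2 : t * (Real.log I - Real.log t) ≤ t * (I / t - 1) :=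
    mul_le_mul_of_nonneg_left h ht.le
  have h3 : t * (I / t) = I := by field_simp
  nlinarith [h2, h3]

/-- Nash-type logarithmic inequality. -/
theorem stmt_0 {X : Type*} [MeasurableSpace X] (μ : Measure X) [IsProbabilityMeasure μ]
    (Φ : X → ℝ) (hpos : ∀ x, 0 < Φ x)
    (hΦ : Integrable Φ μ)
    (hlog : Integrable (fun x => Real.log (Φ x)) μ)
    (hbdd : IsBoundedUnder (· ≤ ·) (ae μ) Φ) :
    |Real.log (∫ x, Φ x ∂μ) - ∫ x, Real.log (Φ x) ∂μ| * (∫ x, Φ x ∂μ) ≤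
      (essSup Φ μ) * ∫ x, |Real.log (Φ x) - ∫ y, Real.log (Φ y) ∂μ| ∂μ := by
  set I : ℝ := ∫ x, Φ x ∂μ with hIdef
  set L : ℝ := ∫ x, Real.log (Φ x) ∂μ with hLdef
  set M : ℝ := essSup Φ μ with hMdef
  have hI : 0 < I := by
    rw [hIdef]
    rw [integral_pos_iff_support_of_nonneg (fun x => (hpos x).le) hΦ]
    have : Function.support Φ = Set.univ := by
      ext x; simp [Function.support, (hpos x).ne']
    simp [this]
  have hMae : ∀ᵐ x ∂μ, Φ x ≤ M := ae_le_essSup hbdd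
  -- Jensen for log: L ≤ log I
  have hLle : L ≤ Real.log I := by
    have hg : Integrable (fun x => Φ x / I - 1) μ := by
      exact (hΦ.div_const I).sub (integrable_const (1:ℝ))
    have hint : Integrable (fun x => Real.log I + (Φ x / I - 1)) μ :=
      (integrable_const _).add hg
    have hpt : ∀ x, Real.log (Φ x) ≤ Real.log I + (Φ x / I - 1) := by
      intro x
      have h := Real.log_le_sub_one_of_pos (div_pos (hpos x) hI)
      rw [Real.log_div (hpos x).ne' hI.ne'] at h
      linarith
    have hle := integral_mono hlog hint hpt
    have h1 : ∫ x, (Real.log I + (Φ x / I - 1)) ∂μ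
        = Real.log I + ((∫ x, Φ x ∂μ) / I - 1) := by
      rw [integral_add (integrable_const _) hg, integral_const,
        integral_sub (hΦ.div_const I) (integrable_const 1), integral_div, integral_const]
      simp
    rw [h1, ← hIdef, div_self hI.ne'] at hle
    linarith
  -- integrability facts
  have habs : Integrable (fun x => |Real.log (Φ x) - L|) μ :=
    (hlog.sub (integrable_const L)).abs
  have hMabs : Integrable (fun x => M * |Real.log (Φ x) - L|) μ := habs.const_mul M
  have hmeas : AEStronglyMeasurable (fun x => Φ x * (Real.log (Φ x) - L)) μ :=
    hΦ.1.mul ((hlog.sub (integrable_const L)).1)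
  have hbound : ∀ᵐ x ∂μ, ‖Φ x * (Real.log (Φ x) - L)‖ ≤ M * |Real.log (Φ x) - L| := by
    filter_upwards [hMae] with x hx
    rw [Real.norm_eq_abs, abs_mul, abs_of_pos (hpos x)]
    exact mul_le_mul_of_nonneg_right hx (abs_nonneg _)
  have hh : Integrable (fun x => Φ x * (Real.log (Φ x) - L)) μ :=
    Integrable.mono' hMabs hmeas hbound
  -- lower bound: (log I - L) * I ≤ ∫ Φ (log Φ - L)
  have hlow : (Real.log I - L) * I ≤ ∫ x, Φ x * (Real.log (Φ x) - L) ∂μ := by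
    have hg : Integrable (fun x => Φ x - I) μ := hΦ.sub (integrable_const I)
    have hint : Integrable (fun x => (Real.log I - L) * Φ x + (Φ x - I)) μ :=
      (hΦ.const_mul _).add hg
    have hpt : ∀ x, (Real.log I - L) * Φ x + (Φ x - I) ≤ Φ x * (Real.log (Φ x) - L) := by
      intro x
      have h := key_pt (hpos x) hI
      nlinarith [h]
    have hle := integral_mono hint hh hpt
    have h1 : ∫ x, ((Real.log I - L) * Φ x + (Φ x - I)) ∂μ
        = (Real.log I - L) * (∫ x, Φ x ∂μ) + ((∫ x, Φ x ∂μ) - I) := by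
      rw [integral_add (hΦ.const_mul _) hg, integral_sub hΦ (integrable_const I),
        integral_const_mul, integral_const]
      simp
    rw [h1, ← hIdef, sub_self, add_zero] at hle
    exact hle
  -- upper bound
  have hup : ∫ x, Φ x * (Real.log (Φ x) - L) ∂μ ≤ M * ∫ x, |Real.log (Φ x) - L| ∂μ := by
    have hpt : ∀ᵐ x ∂μ, Φ x * (Real.log (Φ x) - L) ≤ M * |Real.log (Φ x) - L| := by
      filter_upwards [hbound] with x hx
      rw [Real.norm_eq_abs] at hx
      exact (le_abs_self _).trans hx
    calc ∫ x, Φ x * (Real.log (Φ x) - L) ∂μ ≤ ∫ x, M * |Real.log (Φ x) - L| ∂μ :=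
          integral_mono_ae hh hMabs hpt
      _ = M * ∫ x, |Real.log (Φ x) - L| ∂μ := integral_const_mul _ _
  rw [abs_of_nonneg (sub_nonneg.2 hLle)]
  linarith
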